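/- Let G be a finite connected simple graph with domination number γ(G) ≥ 2. For any finite simple graph H, μt(G ∘ H) = n(G)·(n(H) − 1) + μt(G), where G ∘ H is the lexicographic product. -/

import Mathlib

open SimpleGraph

/-- `X` is a total mutual-visibility set of `G`: every two vertices of `G` are `X`-visible,
i.e. joined by a shortest path whose internal vertices avoid `X`. -/
def IsTMVSet {V : Type*} (G : SimpleGraph V) (X : Set V) : Prop :=
  ∀ x y : V, ∃ p : G.Walk x y, p.length = G.dist x y ∧
    ∀ w ∈ p.support, w ≠ x → w ≠ y → w ∉ X

/-- The total mutual-visibility number of `G`. -/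
noncomputable def muT {V : Type*} (G : SimpleGraph V) : ℕ :=
  sSup {n : ℕ | ∃ X : Set V, IsTMVSet G X ∧ X.ncard = n}

/-- `D` is a dominating set of `G`. -/
def IsDomSet {V : Type*} (G : SimpleGraph V) (D : Set V) : Prop :=
  ∀ v : V, v ∉ D → ∃ u ∈ D, G.Adj u v

/-- The domination number of `G`. -/
noncomputable def gammaDom {V : Type*} (G : SimpleGraph V) : ℕ :=
  sInf {n : ℕ | ∃ D : Set V, IsDomSet G D ∧ D.ncard = n}

/-- `D` is a connected dominating set of `G`. -/
def IsConnDomSet {V : Type*} (G : SimpleGraph V) (D : Set V) : Prop :=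
  IsDomSet G D ∧ (G.induce D).Connected

/-- The connected domination number of `G`. -/
noncomputable def gammaConnDom {V : Type*} (G : SimpleGraph V) : ℕ :=
  sInf {n : ℕ | ∃ D : Set V, IsConnDomSet G D ∧ D.ncard = n}

/-- The closed neighborhood of a vertex. -/
def closedNbhd {V : Type*} (G : SimpleGraph V) (v : V) : Set V :=
  insert v (G.neighborSet v)

/-- The set of simplicial vertices of `G`. -/
def simpSet {V : Type*} (G : SimpleGraph V) : Set V :=
  {v | G.IsClique (G.neighborSet v)}

/-- The set `P(G)` of vertices that appear as the unique common closed neighbor of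
two vertices. -/
def pSet {V : Type*} (G : SimpleGraph V) : Set V :=
  {v | ∃ u w : V, closedNbhd G u ∩ closedNbhd G w = {v}}

/-- The set `C(G)` of vertices belonging to every maximum total mutual-visibility set. -/
def compulsorySet {V : Type*} (G : SimpleGraph V) : Set V :=
  {v | ∀ X : Set V, IsTMVSet G X → X.ncard = muT G → v ∈ X}

/-- The set `F(G)` of vertices belonging to no maximum total mutual-visibility set. -/
def forbiddenSet {V : Type*} (G : SimpleGraph V) : Set V :=
  {v | ∀ X : Set V, IsTMVSet G X → X.ncard = muT G → v ∉ X}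

/-- The independent total mutual-visibility number of `G`. -/
noncomputable def muIT {V : Type*} (G : SimpleGraph V) : ℕ :=
  sSup {n : ℕ | ∃ X : Set V, IsTMVSet G X ∧ (∀ u ∈ X, ∀ v ∈ X, ¬ G.Adj u v) ∧ X.ncard = n}

/-- The join `G + H` of two graphs. -/
def joinGraph {V W : Type*} (G : SimpleGraph V) (H : SimpleGraph W) :
    SimpleGraph (V ⊕ W) :=
  SimpleGraph.fromRel (fun x y =>
    (∃ a b, x = Sum.inl a ∧ y = Sum.inl b ∧ G.Adj a b) ∨
    (∃ a b, x = Sum.inr a ∧ y = Sum.inr b ∧ H.Adj a b) ∨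
    (∃ a b, x = Sum.inl a ∧ y = Sum.inr b))

/-- The corona product `G ⊙ H`: a copy of `G` together with a copy `Hᵢ` of `H` for each
vertex `uᵢ` of `G`, where `uᵢ` is joined to all vertices of `Hᵢ`. -/
def coronaProd {V W : Type*} (G : SimpleGraph V) (H : SimpleGraph W) :
    SimpleGraph (V ⊕ V × W) :=
  SimpleGraph.fromRel (fun x y =>
    (∃ a b, x = Sum.inl a ∧ y = Sum.inl b ∧ G.Adj a b) ∨
    (∃ i w w', x = Sum.inr (i, w) ∧ y = Sum.inr (i, w') ∧ H.Adj w w') ∨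
    (∃ i w, x = Sum.inl i ∧ y = Sum.inr (i, w)))

/-- The lexicographic product `G ∘ H`. -/
def lexProd {V W : Type*} (G : SimpleGraph V) (H : SimpleGraph W) :
    SimpleGraph (V × W) where
  Adj x y := G.Adj x.1 y.1 ∨ (x.1 = y.1 ∧ H.Adj x.2 y.2)
  symm := ⟨fun x y h => by
    rcases h with h | ⟨h1, h2⟩
    · exact Or.inl h.symm
    · exact Or.inr ⟨h1.symm, h2.symm⟩⟩
  loopless := ⟨fun x h => by
    rcases h with h | ⟨_, h⟩
    · exact G.loopless.irrefl _ h
    · exact H.loopless.irrefl _ h⟩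

/-- `B` induces a 2-connected subgraph of `G`. -/
def IsTwoConnSet {V : Type*} (G : SimpleGraph V) (B : Set V) : Prop :=
  3 ≤ B.ncard ∧ (G.induce B).Connected ∧ ∀ v ∈ B, (G.induce (B \ {v})).Connected

/-!
Let `S` be a maximum total mutual-visibility set of `G` and `w₀ ∈ V(H)`. In `G ∘ H`, vertices
over distinct `x, x'` are at distance `d_G(x, x')`, and a shortest `S`-visible path of `G`
lifts to one running through the `w₀`-layer; vertices in the same `G`-fibre are at distance
at most 2, via any neighbour of `x`. Because `γ(G) ≥ 2`, every `x` has a non-neighbour, so the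
second vertex of a shortest `S`-visible path to it is a neighbour of `x` outside `S`. Hence
removing the `w₀`-copy of `V(G) ∖ S` leaves a total mutual-visibility set of size
`n(G)(n(H) - 1) + μt(G)`.

Conversely, if `Y` is a total mutual-visibility set of `G ∘ H`, projecting shortest paths
to `G` shows that the set of `x` whose whole fibre lies in `Y` is a total mutual-visibility
set of `G`; every other fibre misses a vertex of `Y`, which bounds `|Y|`.
-/

namespace SimpleGraph

variable {V W : Type*}

section Visibility

variable {G : SimpleGraph V} {X : Set V} {x y a : V}

/-- `IsTMVSet G X` unfolds to `∀ x y, IsVisible G X x y`. -/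
def IsVisible (G : SimpleGraph V) (X : Set V) (x y : V) : Prop :=
  ∃ p : G.Walk x y, p.length = G.dist x y ∧ ∀ w ∈ p.support, w ≠ x → w ≠ y → w ∉ X

theorem isVisible_refl (x : V) : IsVisible G X x x :=
  ⟨.nil, by simp, fun _ hw hne _ => absurd (List.mem_singleton.mp hw) hne⟩

theorem Adj.isVisible (h : G.Adj x y) : IsVisible G X x y := by
  refine ⟨.cons h .nil, (dist_eq_one_iff_adj.mpr h).symm, fun w hw hwx hwy => ?_⟩
  simp only [Walk.support_cons, Walk.support_nil, List.mem_cons, List.not_mem_nil,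
    or_false] at hw
  tauto

theorem isVisible_of_adj_of_adj (hxa : G.Adj x a) (hay : G.Adj a y) (hxy : x ≠ y)
    (hnxy : ¬G.Adj x y) (ha : a ∉ X) : IsVisible G X x y := by
  let p : G.Walk x y := .cons hxa (.cons hay .nil)
  refine ⟨p, ?_, fun w hw hwx hwy => ?_⟩
  · have hle : G.dist x y ≤ p.length := dist_le p
    have hlt : 1 < G.dist x y := Reachable.one_lt_dist_of_ne_of_not_adj ⟨p⟩ hxy hnxy
    simp only [p, Walk.length_cons, Walk.length_nil] at hle ⊢
    omega
  · simp only [p, Walk.support_cons, Walk.support_nil, List.mem_cons, List.not_mem_nil,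
      or_false] at hw
    rcases hw with rfl | rfl | rfl <;> tauto

theorem IsVisible.exists_adj_notMem (h : IsVisible G X x y) (hxy : x ≠ y) (hnxy : ¬G.Adj x y) :
    ∃ a, G.Adj x a ∧ a ∉ X := by
  obtain ⟨p, -, hp⟩ := h
  cases p with
  | nil => exact absurd rfl hxy
  | cons e q =>
    exact ⟨_, e, hp _ (by simp) e.ne' fun h => hnxy (h ▸ e)⟩

end Visibility

section TotalMutualVisibility

variable {G : SimpleGraph V}

theorem bddAbove_ncard_isTMVSet [Finite V] (G : SimpleGraph V) :
    BddAbove {n | ∃ X, IsTMVSet G X ∧ X.ncard = n} :=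
  ⟨Nat.card V, by rintro _ ⟨X, -, rfl⟩; exact Set.ncard_le_card X⟩

theorem IsTMVSet.ncard_le_muT [Finite V] {X : Set V} (hX : IsTMVSet G X) : X.ncard ≤ muT G :=
  le_csSup (bddAbove_ncard_isTMVSet G) ⟨X, hX, rfl⟩

theorem muT_le {n : ℕ} (h : ∀ X, IsTMVSet G X → X.ncard ≤ n) : muT G ≤ n :=
  csSup_le' fun _ ⟨X, hX, hn⟩ => hn ▸ h X hX

theorem Connected.isTMVSet_empty (hG : G.Connected) : IsTMVSet G ∅ := fun x y =>
  have ⟨p, hp⟩ := (hG x y).exists_walk_length_eq_dist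
  ⟨p, hp, fun w _ _ _ => Set.notMem_empty w⟩

theorem Connected.exists_isTMVSet_ncard_eq_muT [Finite V] (hG : G.Connected) :
    ∃ X, IsTMVSet G X ∧ X.ncard = muT G :=
  Nat.sSup_mem (s := {n | ∃ X, IsTMVSet G X ∧ X.ncard = n})
    ⟨0, ∅, hG.isTMVSet_empty, Set.ncard_empty V⟩ (bddAbove_ncard_isTMVSet G)

theorem exists_not_adj_of_two_le_gammaDom (hγ : 2 ≤ gammaDom G) (x : V) :
    ∃ z, z ≠ x ∧ ¬G.Adj x z := by
  have hdom : ¬IsDomSet G {x} := fun h => by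
    have : gammaDom G ≤ 1 := Nat.sInf_le ⟨{x}, h, Set.ncard_singleton x⟩
    omega
  simpa [IsDomSet] using hdom

theorem IsTMVSet.exists_adj_notMem (hγ : 2 ≤ gammaDom G) {S : Set V} (hS : IsTMVSet G S)
    (x : V) : ∃ a, G.Adj x a ∧ a ∉ S :=
  have ⟨z, hzx, hxz⟩ := exists_not_adj_of_two_le_gammaDom hγ x
  IsVisible.exists_adj_notMem (hS x z) hzx.symm hxz

end TotalMutualVisibility

section LexProd

variable {G : SimpleGraph V} {H : SimpleGraph W}

def lexProdGraphHom (G : SimpleGraph V) (H : SimpleGraph W) (g : V → W) : G →g lexProd G H where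
  toFun c := (c, g c)
  map_rel' h := Or.inl h

@[simp]
theorem lexProdGraphHom_apply (g : V → W) (c : V) :
    lexProdGraphHom G H g c = (c, g c) :=
  rfl

theorem exists_walk_fst_of_lexProd_walk {u v : V × W} (p : (lexProd G H).Walk u v) :
    ∃ q : G.Walk u.1 v.1, q.length ≤ p.length ∧
      ∀ c ∈ q.support, ∃ d, (c, d) ∈ p.support := by
  induction p with
  | @nil u => exact ⟨.nil, le_rfl, fun c hc => ⟨u.2, by simp_all⟩⟩
  | @cons u m v e p ih =>
    obtain ⟨q, hlen, hsupp⟩ := ih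
    have hsupp' : ∀ c ∈ q.support, ∃ d, (c, d) ∈ (Walk.cons e p).support :=
      fun c hc => (hsupp c hc).imp fun d hd => List.mem_cons_of_mem _ hd
    by_cases hadj : G.Adj u.1 m.1
    · refine ⟨.cons hadj q, by simpa using hlen, ?_⟩
      simp only [Walk.support_cons, List.forall_mem_cons]
      exact ⟨⟨u.2, by simp⟩, hsupp'⟩
    · have heq : u.1 = m.1 := (e.resolve_left hadj).1
      exact ⟨q.copy heq.symm rfl, by simp; omega, by simpa using hsupp'⟩

theorem lexProd_dist_of_ne (hG : G.Connected) {x x' : V} (hxx : x ≠ x') (y y' : W) :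
    (lexProd G H).dist (x, y) (x', y') = G.dist x x' := by
  classical
  obtain ⟨p, hp⟩ := (hG x x').exists_walk_length_eq_dist
  let q : (lexProd G H).Walk (x, y) (x', y') :=
    (p.map (lexProdGraphHom G H fun c => if c = x then y else y')).copy
      (by simp) (by simp [hxx.symm])
  obtain ⟨r, hr⟩ := Reachable.exists_walk_length_eq_dist ⟨q⟩
  obtain ⟨s, hs, -⟩ := exists_walk_fst_of_lexProd_walk r
  refine le_antisymm ?_ ?_
  · calc _ ≤ q.length := dist_le q
      _ = G.dist x x' := by rw [Walk.length_copy, Walk.length_map, hp]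
  · calc G.dist x x' ≤ s.length := dist_le s
      _ ≤ _ := hr ▸ hs

theorem IsVisible.lexProd_of_ne (hG : G.Connected) {S : Set V} {X : Set (V × W)} (w₀ : W)
    (hX : ∀ c ∉ S, (c, w₀) ∉ X) {x x' : V} (hxx : x ≠ x') (h : IsVisible G S x x')
    (y y' : W) : IsVisible (lexProd G H) X (x, y) (x', y') := by
  classical
  obtain ⟨p, hp, hpS⟩ := h
  let g : V → W := fun c => if c = x then y else if c = x' then y' else w₀
  let q : (lexProd G H).Walk (x, y) (x', y') := (p.map (lexProdGraphHom G H g)).copy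
    (by simp [g]) (by simp [g, hxx.symm])
  refine ⟨q, by rw [Walk.length_copy, Walk.length_map, hp, lexProd_dist_of_ne hG hxx], ?_⟩
  simp only [q, Walk.support_copy, Walk.support_map, List.mem_map]
  rintro _ ⟨c, hc, rfl⟩ hcx hcx'
  have hcx : c ≠ x := by rintro rfl; simp [g] at hcx
  have hcx' : c ≠ x' := by rintro rfl; simp [g, hxx.symm] at hcx'
  simpa [g, hcx, hcx'] using hX c (hpS c hc hcx hcx')

theorem isTMVSet_lexProd (hG : G.Connected) {S : Set V} (hS : IsTMVSet G S)
    (hout : ∀ x, ∃ a, G.Adj x a ∧ a ∉ S) (w₀ : W) :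
    IsTMVSet (lexProd G H) {v | v.2 = w₀ → v.1 ∈ S} := by
  have hX : ∀ c ∉ S, (c, w₀) ∉ {v : V × W | v.2 = w₀ → v.1 ∈ S} :=
    fun c hc h => hc (h rfl)
  rintro ⟨x, y⟩ ⟨x', y'⟩
  rcases ne_or_eq x x' with hxx | rfl
  · exact IsVisible.lexProd_of_ne hG w₀ hX hxx (hS x x') y y'
  rcases eq_or_ne y y' with rfl | hyy
  · exact isVisible_refl _
  by_cases hadj : H.Adj y y'
  · exact Adj.isVisible (Or.inr ⟨rfl, hadj⟩)
  -- `(x, y)` and `(x, y')` are at distance 2, seen through the `w₀`-copy of a neighbour of `x`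
  -- outside `S`.
  obtain ⟨a, hxa, ha⟩ := hout x
  refine isVisible_of_adj_of_adj (a := (a, w₀)) (Or.inl hxa) (Or.inl hxa.symm) (by simpa)
    ?_ (hX a ha)
  rintro (h | ⟨-, h⟩)
  exacts [G.loopless.irrefl _ h, hadj h]

def fullFibers (Y : Set (V × W)) : Set V := {x | ∀ b, (x, b) ∈ Y}

theorem IsTMVSet.fullFibers_of_lexProd (hG : G.Connected) (w₀ : W) {Y : Set (V × W)}
    (hY : IsTMVSet (lexProd G H) Y) : IsTMVSet G (fullFibers Y) := by
  intro x x'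
  rcases eq_or_ne x x' with rfl | hxx
  · exact isVisible_refl x
  obtain ⟨p, hp, hpY⟩ := hY (x, w₀) (x', w₀)
  obtain ⟨q, hq, hqp⟩ := exists_walk_fst_of_lexProd_walk p
  refine ⟨q, le_antisymm (lexProd_dist_of_ne hG hxx w₀ w₀ ▸ hp ▸ hq) (dist_le q), ?_⟩
  intro c hc hcx hcx' hcY
  obtain ⟨d, hd⟩ := hqp c hc
  exact hpY _ hd (by simp [hcx]) (by simp [hcx']) (hcY d)

end LexProd

section Counting

variable [Fintype V] [Fintype W]

theorem ncard_le_card_mul_add_ncard_fullFibers (Y : Set (V × W)) :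
    Y.ncard ≤ Fintype.card V * (Fintype.card W - 1) + (fullFibers Y).ncard := by
  have hsub : (fullFibers Y)ᶜ ⊆ Prod.fst '' Yᶜ := fun x hx => by
    obtain ⟨b, hb⟩ : ∃ b, (x, b) ∉ Y := by simpa [fullFibers] using hx
    exact ⟨(x, b), hb, rfl⟩
  have hcompl := (Set.ncard_le_ncard hsub).trans (Set.ncard_image_le (s := Yᶜ))
  have hY := Set.ncard_add_ncard_compl Y
  have hF := Set.ncard_add_ncard_compl (fullFibers Y)
  rw [Nat.card_eq_fintype_card, Fintype.card_prod] at hY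
  rw [Nat.card_eq_fintype_card] at hF
  rw [Nat.mul_sub_one]
  omega

theorem ncard_setOf_snd_eq_imp_mem (S : Set V) (w₀ : W) :
    {v : V × W | v.2 = w₀ → v.1 ∈ S}.ncard =
      Fintype.card V * (Fintype.card W - 1) + S.ncard := by
  have hcompl : {v : V × W | v.2 = w₀ → v.1 ∈ S}ᶜ = (fun c => (c, w₀)) '' Sᶜ := by
    ext ⟨c, b⟩
    simp [and_comm, eq_comm]
  have hX := Set.ncard_add_ncard_compl {v : V × W | v.2 = w₀ → v.1 ∈ S}
  have hS := Set.ncard_add_ncard_compl S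
  rw [hcompl, Set.ncard_image_of_injective _ fun _ _ h => congrArg Prod.fst h,
    Nat.card_eq_fintype_card, Fintype.card_prod] at hX
  rw [Nat.card_eq_fintype_card] at hS
  have hVW : Fintype.card V ≤ Fintype.card V * Fintype.card W :=
    Nat.le_mul_of_pos_right _ (Fintype.card_pos_iff.mpr ⟨w₀⟩)
  rw [Nat.mul_sub_one]
  omega

end Counting

end SimpleGraph

/-- For `G` connected with `γ(G) ≥ 2` and any graph `H`,
`μt(G ∘ H) = n(G) (n(H) - 1) + μt(G)`. -/
theorem muT_lexProd {V W : Type*} [Fintype V] [Fintype W] [Nonempty W]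
    (G : SimpleGraph V) (H : SimpleGraph W) (hG : G.Connected) (hγ : 2 ≤ gammaDom G) :
    muT (lexProd G H) = Fintype.card V * (Fintype.card W - 1) + muT G := by
  obtain ⟨w₀⟩ := ‹Nonempty W›
  obtain ⟨S, hS, hScard⟩ := hG.exists_isTMVSet_ncard_eq_muT
  refine le_antisymm (muT_le fun Y hY => ?_) ?_
  · calc Y.ncard ≤ Fintype.card V * (Fintype.card W - 1) + (fullFibers Y).ncard :=
          ncard_le_card_mul_add_ncard_fullFibers Y
      _ ≤ _ := Nat.add_le_add_left (hY.fullFibers_of_lexProd hG w₀).ncard_le_muT _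
  · calc _ = {v : V × W | v.2 = w₀ → v.1 ∈ S}.ncard := by
          rw [ncard_setOf_snd_eq_imp_mem, hScard]
      _ ≤ _ := (isTMVSet_lexProd hG hS (hS.exists_adj_notMem hγ) w₀).ncard_le_muT
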